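/- arXiv:2510.13560 — 5 statements merged into one kernel-verified Lean document; each statement's English description precedes it below -/
import Mathlib

section
/- Key step of Lemma 3: let (Ω, F, P) be a probability space with a filtration F_0 ⊆ F_1 ⊆ … ⊆ F_{T−1}, let λ_1,…,λ_T : Ω → ℝ² be integrable random vectors with ‖λ_t‖_∞ ≤ B almost surely, each λ_t independent of F_{t−1} and all with the same mean vector μ = E[λ_t] ∈ ℝ². Let θ_1,…,θ_T : Ω → Δ₂ be such that θ_t is F_{t−1}-measurable, and let θ* ∈ Δ₂ satisfy ⟨θ*, μ⟩ = max_{θ∈Δ₂} ⟨θ, μ⟩. Then E[ Σ_{t=1}^T ⟨θ_t − θ*, λ_t⟩ ] ≤ 0. -/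
/-!
Each round is handled separately. Since `θ t` is `ℱ (t-1)`-measurable and `λ t` is independent
of `ℱ (t-1)`, the expected payoff factorizes: `E⟨θ t, λ t⟩ = ⟨E θ t, μ⟩`. The mean `E θ t` is an
average of points of the closed convex set `Δ₂`, hence lies in `Δ₂`, so the optimality of `θ⋆`
gives `⟨E θ t, μ⟩ ≤ ⟨θ⋆, μ⟩`, i.e. every round has nonpositive expected regret.
-/

open Finset MeasureTheory ProbabilityTheory

section StdSimplex

variable {Ω ι : Type*} [Fintype ι] {mΩ : MeasurableSpace Ω} {P : Measure Ω}
  {X Y : Ω → ι → ℝ}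

lemma integrable_of_mem_stdSimplex [IsFiniteMeasure P] (hX : AEStronglyMeasurable X P)
    (hXs : ∀ ω, X ω ∈ stdSimplex ℝ ι) : Integrable X P :=
  .of_bound hX 1 <| ae_of_all _ fun ω => by
    simpa using stdSimplex_subset_closedBall (hXs ω)

lemma integral_mem_stdSimplex [IsProbabilityMeasure P] (hX : AEStronglyMeasurable X P)
    (hXs : ∀ ω, X ω ∈ stdSimplex ℝ ι) : (fun i => ∫ ω, X ω i ∂P) ∈ stdSimplex ℝ ι := by
  have hint := integrable_of_mem_stdSimplex hX hXs
  convert (convex_stdSimplex ℝ ι).integral_mem (isClosed_stdSimplex ℝ ι) (ae_of_all _ hXs) hint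
    using 1
  exact (funext (eval_integral hint.eval)).symm

lemma integrable_mul_of_mem_stdSimplex (hX : AEStronglyMeasurable X P)
    (hXs : ∀ ω, X ω ∈ stdSimplex ℝ ι) {i : ι} (hY : Integrable (fun ω => Y ω i) P) :
    Integrable (fun ω => X ω i * Y ω i) P :=
  hY.bdd_mul ((continuous_apply i).comp_aestronglyMeasurable hX) <| ae_of_all _ fun ω => by
    have := mem_Icc_of_mem_stdSimplex (hXs ω) i
    rw [Real.norm_of_nonneg this.1]
    exact this.2

lemma integrable_sub_mul_of_mem_stdSimplex (hX : AEStronglyMeasurable X P)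
    (hXs : ∀ ω, X ω ∈ stdSimplex ℝ ι) {i : ι} (hY : Integrable (fun ω => Y ω i) P) (c : ℝ) :
    Integrable (fun ω => (X ω i - c) * Y ω i) P := by
  simp_rw [sub_mul]
  exact (integrable_mul_of_mem_stdSimplex hX hXs hY).sub (hY.const_mul c)

lemma integrable_sum_sub_mul_of_mem_stdSimplex (hX : AEStronglyMeasurable X P)
    (hXs : ∀ ω, X ω ∈ stdSimplex ℝ ι) (hY : ∀ i, Integrable (fun ω => Y ω i) P) (θs : ι → ℝ) :
    Integrable (fun ω => ∑ i, (X ω i - θs i) * Y ω i) P :=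
  integrable_finsetSum _ fun i _ => integrable_sub_mul_of_mem_stdSimplex hX hXs (hY i) (θs i)

end StdSimplex

section Round

variable {Ω ι : Type*} [Fintype ι] {ℱ mΩ : MeasurableSpace Ω} {P : Measure Ω}
  {X Y : Ω → ι → ℝ}

lemma integral_mul_eq_mul_integral_of_indep
    (hXY : Indep (MeasurableSpace.comap Y inferInstance) ℱ P) (hℱ : ℱ ≤ mΩ)
    (hX : Measurable[ℱ] X) (i : ι) (hY : AEStronglyMeasurable (fun ω => Y ω i) P) :
    ∫ ω, X ω i * Y ω i ∂P = (∫ ω, X ω i ∂P) * ∫ ω, Y ω i ∂P := by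
  have hindep : IndepFun Y X P := by
    rw [IndepFun_iff_Indep]
    exact indep_of_indep_of_le_right hXY hX.comap_le
  exact (hindep.symm.comp (measurable_pi_apply i) (measurable_pi_apply i))
    |>.integral_mul_eq_mul_integral
      ((continuous_apply i).comp_aestronglyMeasurable (hX.mono hℱ le_rfl).aestronglyMeasurable) hY

lemma integral_sum_sub_mul_nonpos_of_indep [IsProbabilityMeasure P] (hℱ : ℱ ≤ mΩ)
    (hX : Measurable[ℱ] X) (hXs : ∀ ω, X ω ∈ stdSimplex ℝ ι)
    (hY : ∀ i, Integrable (fun ω => Y ω i) P)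
    (hXY : Indep (MeasurableSpace.comap Y inferInstance) ℱ P)
    {μ : ι → ℝ} (hmean : ∀ i, ∫ ω, Y ω i ∂P = μ i)
    {θs : ι → ℝ} (hopt : ∀ ϑ ∈ stdSimplex ℝ ι, ∑ i, ϑ i * μ i ≤ ∑ i, θs i * μ i) :
    ∫ ω, ∑ i, (X ω i - θs i) * Y ω i ∂P ≤ 0 := by
  have hXm : AEStronglyMeasurable X P := (hX.mono hℱ le_rfl).aestronglyMeasurable
  have hterm (i : ι) :
      ∫ ω, (X ω i - θs i) * Y ω i ∂P = (∫ ω, X ω i ∂P) * μ i - θs i * μ i := by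
    simp_rw [sub_mul]
    rw [integral_sub (integrable_mul_of_mem_stdSimplex hXm hXs (hY i)) ((hY i).const_mul _),
      integral_mul_eq_mul_integral_of_indep hXY hℱ hX i (hY i).aestronglyMeasurable,
      integral_const_mul, hmean]
  rw [integral_finsetSum _ fun i _ => integrable_sub_mul_of_mem_stdSimplex hXm hXs (hY i) (θs i)]
  simp only [hterm, Finset.sum_sub_distrib, sub_nonpos]
  exact hopt _ (integral_mem_stdSimplex hXm hXs)

end Round

theorem key_step_lemma3_general
    (T : ℕ)
    (Ω : Type) [m : MeasurableSpace Ω] (P : Measure Ω) [IsProbabilityMeasure P]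
    (ℱ : Filtration ℕ m)
    (lam : ℕ → Ω → Fin 2 → ℝ)
    (hint : ∀ t ∈ Finset.Icc 1 T, ∀ i, Integrable (fun ω => lam t ω i) P)
    (hindep : ∀ t ∈ Finset.Icc 1 T,
      Indep (MeasurableSpace.comap (lam t) inferInstance) (ℱ (t - 1)) P)
    (μ : Fin 2 → ℝ)
    (hmean : ∀ t ∈ Finset.Icc 1 T, ∀ i, (∫ ω, lam t ω i ∂P) = μ i)
    (θ : ℕ → Ω → Fin 2 → ℝ)
    (hθmeas : ∀ t ∈ Finset.Icc 1 T, Measurable[ℱ (t - 1)] (θ t))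
    (hθsimplex : ∀ t ∈ Finset.Icc 1 T, ∀ ω, θ t ω ∈ stdSimplex ℝ (Fin 2))
    (θs : Fin 2 → ℝ)
    (hθsopt : ∀ ϑ ∈ stdSimplex ℝ (Fin 2), ∑ i, ϑ i * μ i ≤ ∑ i, θs i * μ i) :
    (∫ ω, ∑ t ∈ Finset.Icc 1 T, ∑ i, (θ t ω i - θs i) * lam t ω i ∂P) ≤ 0 := by
  have hθm (t : ℕ) (ht : t ∈ Finset.Icc 1 T) : AEStronglyMeasurable (θ t) P :=
    ((hθmeas t ht).mono (ℱ.le _) le_rfl).aestronglyMeasurable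
  rw [integral_finsetSum _ fun t ht =>
    integrable_sum_sub_mul_of_mem_stdSimplex (hθm t ht) (hθsimplex t ht) (hint t ht) θs]
  exact Finset.sum_nonpos fun t ht => integral_sum_sub_mul_nonpos_of_indep (ℱ.le _)
    (hθmeas t ht) (hθsimplex t ht) (hint t ht) (hindep t ht) (hmean t ht) hθsopt

/-- **Key step of Lemma 3.**
If `λ t` are integrable `ℝ²`-valued random vectors bounded by `B`, each independent of
`ℱ (t−1)` and all with common mean `μ`, the weights `θ t` are `ℱ (t−1)`-measurable and
take values in the simplex `Δ₂`, and `θ⋆ ∈ Δ₂` maximizes `⟨·, μ⟩` over `Δ₂`, then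
`E[ Σ_t ⟨θ t − θ⋆, λ t⟩ ] ≤ 0`. -/
theorem key_step_lemma3
    (T : ℕ) (B : ℝ)
    (Ω : Type) [m : MeasurableSpace Ω] (P : Measure Ω) [IsProbabilityMeasure P]
    (ℱ : Filtration ℕ m)
    (lam : ℕ → Ω → Fin 2 → ℝ)
    (hmeas : ∀ t ∈ Finset.Icc 1 T, Measurable (lam t))
    (hint : ∀ t ∈ Finset.Icc 1 T, ∀ i, Integrable (fun ω => lam t ω i) P)
    (hbdd : ∀ t ∈ Finset.Icc 1 T, ∀ᵐ ω ∂P, ∀ i, |lam t ω i| ≤ B)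
    (hindep : ∀ t ∈ Finset.Icc 1 T,
      Indep (MeasurableSpace.comap (lam t) inferInstance) (ℱ (t - 1)) P)
    (μ : Fin 2 → ℝ)
    (hmean : ∀ t ∈ Finset.Icc 1 T, ∀ i, (∫ ω, lam t ω i ∂P) = μ i)
    (θ : ℕ → Ω → Fin 2 → ℝ)
    (hθmeas : ∀ t ∈ Finset.Icc 1 T, Measurable[ℱ (t - 1)] (θ t))
    (hθsimplex : ∀ t ∈ Finset.Icc 1 T, ∀ ω, θ t ω ∈ stdSimplex ℝ (Fin 2))
    (θs : Fin 2 → ℝ) (hθs : θs ∈ stdSimplex ℝ (Fin 2))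
    (hθsopt : ∀ ϑ ∈ stdSimplex ℝ (Fin 2), ∑ i, ϑ i * μ i ≤ ∑ i, θs i * μ i) :
    (∫ ω, ∑ t ∈ Finset.Icc 1 T, ∑ i, (θ t ω i - θs i) * lam t ω i ∂P) ≤ 0 :=
  key_step_lemma3_general T Ω (m := m) P ℱ lam hint hindep μ hmean θ hθmeas hθsimplex θs hθsopt
end

section
/- Lemma 3 (E[R₃] ≤ 0 in the i.i.d. model): let 𝒳 ⊆ ℝ^d be nonempty compact convex, let (Ω, F, P) be a probability space with filtration (F_t)_{t≥0}, and let (f_t, g_t)_{t=1}^T be random pairs of continuous functions 𝒳 → ℝ, jointly measurable, uniformly bounded by B, independent and identically distributed across t with each (f_t, g_t) independent of F_{t−1}; write λ_t(x) = (f_t(x), g_t(x)) and μ(x) = E[λ_t(x)] ∈ ℝ² (independent of t). Let θ_1,…,θ_T : Ω → Δ₂ be such that θ_t is F_{t−1}-measurable. Then E[ min_{x∈𝒳} Σ_{t=1}^T ⟨θ_t, λ_t(x)⟩ ] ≤ T · min_{x∈𝒳} max_{θ∈Δ₂} ⟨θ, μ(x)⟩, i.e., the expectation of R₃ := min_{x∈𝒳}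 Σ_{t=1}^T ⟨θ_t, λ_t(x)⟩ − T · min_{x∈𝒳} max_{θ∈Δ₂} ⟨θ, μ(x)⟩ is at most 0. -/
open Finset MeasureTheory ProbabilityTheory

/-!
For every fixed `x ∈ 𝒳`, the pathwise minimum is at most `Σₜ ⟨θₜ, λₜ(x)⟩`. Since `θₜ` is
`ℱ (t-1)`-measurable and `λₜ` is independent of `ℱ (t-1)`, the expectation of the `t`-th summand
factors as `⟨E θₜ, μ(x)⟩`, and `E θₜ ∈ Δ₂` because the simplex is closed and convex; so each summand
has expectation at most `max_{θ ∈ Δ₂} ⟨θ, μ(x)⟩`. Minimising over `x` gives the claim. The only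
measure-theoretic subtlety is the measurability of the pathwise minimum, which reduces to an
infimum over a countable dense subset of `𝒳` by continuity.
-/

theorem Real.abs_sInf_le {s : Set ℝ} {C : ℝ} (hs : s.Nonempty) (h : ∀ a ∈ s, |a| ≤ C) :
    |sInf s| ≤ C := by
  obtain ⟨a, ha⟩ := hs
  have hbdd : BddBelow s := ⟨-C, fun b hb => neg_le_of_abs_le (h b hb)⟩
  exact abs_le.2 ⟨le_csInf ⟨a, ha⟩ fun b hb => neg_le_of_abs_le (h b hb),
    (csInf_le hbdd ha).trans (le_of_abs_le (h a ha))⟩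

theorem le_mul_sInf_image {α : Type*} {X : Set α} (hX : X.Nonempty) {h : α → ℝ} {a c : ℝ}
    (hc : 0 ≤ c) (H : ∀ x ∈ X, a ≤ c * h x) : a ≤ c * sInf (h '' X) := by
  have := hX.to_subtype
  rw [sInf_image', Real.mul_iInf_of_nonneg hc]
  exact le_ciInf fun x => H x x.2

theorem abs_stdSimplex_comb_le {ϑ : Fin 2 → ℝ} (hϑ : ϑ ∈ stdSimplex ℝ (Fin 2)) {a b B : ℝ}
    (ha : |a| ≤ B) (hb : |b| ≤ B) : |ϑ 0 * a + ϑ 1 * b| ≤ B := by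
  have hsum : ϑ 0 + ϑ 1 = 1 := by simpa [Fin.sum_univ_two] using hϑ.2
  exact abs_le.2 <| convex_Icc (-B) B (abs_le.1 ha) (abs_le.1 hb) (hϑ.1 0) (hϑ.1 1) hsum

theorem le_sSup_stdSimplex_image (v : Fin 2 → ℝ) {ϑ : Fin 2 → ℝ}
    (hϑ : ϑ ∈ stdSimplex ℝ (Fin 2)) :
    ϑ 0 * v 0 + ϑ 1 * v 1 ≤
      sSup ((fun ϑ : Fin 2 → ℝ => ϑ 0 * v 0 + ϑ 1 * v 1) '' stdSimplex ℝ (Fin 2)) :=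
  le_csSup ((isCompact_stdSimplex ℝ (Fin 2)).bddAbove_image (Continuous.continuousOn (by fun_prop)))
    ⟨ϑ, hϑ, rfl⟩

section Expectation

variable {Ω : Type*} {m : MeasurableSpace Ω} {P : Measure Ω}

theorem measurable_sInf_image_of_continuousOn {α : Type*} [TopologicalSpace α] {X : Set α}
    [TopologicalSpace.SeparableSpace X] {F : Ω → α → ℝ} (hcont : ∀ ω, ContinuousOn (F ω) X)
    (hmeas : ∀ y ∈ X, Measurable fun ω => F ω y) :
    Measurable fun ω => sInf (F ω '' X) := by
  obtain ⟨S, hS_countable, hS_dense⟩ := TopologicalSpace.exists_countable_dense X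
  have := hS_countable.to_subtype
  have hinf : ∀ ω, sInf (F ω '' X) = ⨅ s : S, F ω s := fun ω => by
    rw [sInf_image']
    exact (hS_dense.ciInf' (hcont ω).domRestrict).symm
  simp_rw [hinf]
  exact .iInf fun s => hmeas _ s.1.2

theorem integral_sInf_image_le [IsFiniteMeasure P] {α : Type*} [TopologicalSpace α]
    {X : Set α} [TopologicalSpace.SeparableSpace X] {F : Ω → α → ℝ}
    (hcont : ∀ ω, ContinuousOn (F ω) X) (hmeas : ∀ y ∈ X, Measurable fun ω => F ω y) {C : ℝ}
    (hC : ∀ ω, ∀ y ∈ X, |F ω y| ≤ C) {x : α} (hx : x ∈ X) :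
    ∫ ω, sInf (F ω '' X) ∂P ≤ ∫ ω, F ω x ∂P := by
  have hmin_meas := measurable_sInf_image_of_continuousOn (m := m) hcont hmeas
  have hbdd : ∀ ω, BddBelow (F ω '' X) := fun ω =>
    ⟨-C, Set.forall_mem_image.2 fun y hy => neg_le_of_abs_le (hC ω y hy)⟩
  refine integral_mono (.of_bound hmin_meas.aestronglyMeasurable C (ae_of_all _ fun ω =>
      Real.abs_sInf_le ⟨_, x, hx, rfl⟩ (Set.forall_mem_image.2 (hC ω))))
    (.of_bound (hmeas x hx).aestronglyMeasurable C (ae_of_all _ fun ω => hC ω x hx))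
    fun ω => csInf_le (hbdd ω) ⟨x, hx, rfl⟩

theorem integral_mem_stdSimplex_s5 [IsProbabilityMeasure P] {ι : Type*} [Fintype ι]
    {θ : Ω → ι → ℝ} (hθm : Measurable θ) (hθ : ∀ ω, θ ω ∈ stdSimplex ℝ ι) :
    (fun i => ∫ ω, θ ω i ∂P) ∈ stdSimplex ℝ ι := by
  have hint : Integrable θ P := .of_bound hθm.aestronglyMeasurable 1 <| ae_of_all _ fun ω => by
    simpa using stdSimplex_subset_closedBall (hθ ω)
  convert (convex_stdSimplex ℝ ι).integral_mem (isClosed_stdSimplex ℝ ι) (ae_of_all _ hθ) hint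
    using 1
  funext i
  exact (eval_integral hint.eval i).symm

theorem integral_mul_comp_eq_of_indep {β : Type*} [mβ : MeasurableSpace β]
    {𝒢 : MeasurableSpace Ω} (h𝒢 : 𝒢 ≤ m) {Z : Ω → β}
    (hind : Indep (MeasurableSpace.comap Z mβ) 𝒢 P) {a : Ω → ℝ} (ha : Measurable[𝒢] a)
    {φ : β → ℝ} (hφ : Measurable φ) (hφZ : AEStronglyMeasurable[m] (fun ω => φ (Z ω)) P) :
    ∫ ω, a ω * φ (Z ω) ∂P = (∫ ω, a ω ∂P) * ∫ ω, φ (Z ω) ∂P := by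
  have hZa : IndepFun Z a P :=
    (IndepFun_iff_Indep Z a P).2 (indep_of_indep_of_le_right hind ha.comap_le)
  exact (hZa.comp hφ measurable_id).symm.integral_fun_mul_eq_mul_integral
    (ha.mono h𝒢 le_rfl).aestronglyMeasurable hφZ

variable {E : Type*} {θ : Ω → Fin 2 → ℝ} {f g : Ω → E → ℝ} {y : E}

theorem MeasureTheory.Integrable.stdSimplex_apply_mul {φ : Ω → ℝ} (hφ : Integrable φ P)
    (hθm : Measurable[m] θ) (hθ : ∀ ω, θ ω ∈ stdSimplex ℝ (Fin 2)) (i : Fin 2) :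
    Integrable (fun ω => θ ω i * φ ω) P :=
  hφ.bdd_mul (hθm.eval (a := i)).aestronglyMeasurable <| ae_of_all _ fun ω => by
    rw [Real.norm_of_nonneg ((hθ ω).1 i)]
    exact (mem_Icc_of_mem_stdSimplex (hθ ω) i).2

theorem integral_stdSimplex_comb_eq_of_indep {𝒢 : MeasurableSpace Ω} (h𝒢 : 𝒢 ≤ m)
    (hind : Indep (MeasurableSpace.comap (fun ω => (f ω, g ω)) inferInstance) 𝒢 P)
    (hθm : Measurable[𝒢] θ) (hθ : ∀ ω, θ ω ∈ stdSimplex ℝ (Fin 2))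
    (hf : Integrable (fun ω => f ω y) P) (hg : Integrable (fun ω => g ω y) P) :
    ∫ ω, θ ω 0 * f ω y + θ ω 1 * g ω y ∂P =
      (∫ ω, θ ω 0 ∂P) * (∫ ω, f ω y ∂P) + (∫ ω, θ ω 1 ∂P) * ∫ ω, g ω y ∂P := by
  have hθm' : Measurable[m] θ := hθm.mono h𝒢 le_rfl
  rw [integral_add (hf.stdSimplex_apply_mul hθm' hθ 0) (hg.stdSimplex_apply_mul hθm' hθ 1),
    integral_mul_comp_eq_of_indep h𝒢 hind (hθm.eval (a := 0))
      (φ := fun p => p.1 y) (measurable_fst.eval (a := y)) hf.aestronglyMeasurable,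
    integral_mul_comp_eq_of_indep h𝒢 hind (hθm.eval (a := 1))
      (φ := fun p => p.2 y) (measurable_snd.eval (a := y)) hg.aestronglyMeasurable]

theorem integral_stdSimplex_comb_le_of_indep [IsProbabilityMeasure P] {𝒢 : MeasurableSpace Ω}
    (h𝒢 : 𝒢 ≤ m)
    (hind : Indep (MeasurableSpace.comap (fun ω => (f ω, g ω)) inferInstance) 𝒢 P)
    (hθm : Measurable[𝒢] θ) (hθ : ∀ ω, θ ω ∈ stdSimplex ℝ (Fin 2))
    (hf : Integrable (fun ω => f ω y) P) (hg : Integrable (fun ω => g ω y) P)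
    {v : Fin 2 → ℝ} (hv₀ : ∫ ω, f ω y ∂P = v 0) (hv₁ : ∫ ω, g ω y ∂P = v 1) :
    ∫ ω, θ ω 0 * f ω y + θ ω 1 * g ω y ∂P ≤
      sSup ((fun ϑ : Fin 2 → ℝ => ϑ 0 * v 0 + ϑ 1 * v 1) '' stdSimplex ℝ (Fin 2)) := by
  rw [integral_stdSimplex_comb_eq_of_indep h𝒢 hind hθm hθ hf hg, hv₀, hv₁]
  exact le_sSup_stdSimplex_image v (integral_mem_stdSimplex_s5 (hθm.mono h𝒢 le_rfl) hθ)

end Expectation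

theorem expected_R3_nonpositive_general
    (d T : ℕ) (B : ℝ)
    (X : Set (EuclideanSpace ℝ (Fin d)))
    (hXne : X.Nonempty)
    (Ω : Type) [m : MeasurableSpace Ω] (P : Measure Ω) [IsProbabilityMeasure P]
    (ℱ : Filtration ℕ m)
    (f g : ℕ → Ω → EuclideanSpace ℝ (Fin d) → ℝ)
    (hcont : ∀ t ∈ Finset.Icc 1 T, ∀ ω, ContinuousOn (f t ω) X ∧ ContinuousOn (g t ω) X)
    (hjm : ∀ t ∈ Finset.Icc 1 T,
      Measurable (fun p : Ω × EuclideanSpace ℝ (Fin d) => f t p.1 p.2) ∧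
      Measurable (fun p : Ω × EuclideanSpace ℝ (Fin d) => g t p.1 p.2))
    (hbdd : ∀ t ∈ Finset.Icc 1 T, ∀ ω, ∀ y ∈ X, |f t ω y| ≤ B ∧ |g t ω y| ≤ B)
    (hindep : ∀ t ∈ Finset.Icc 1 T,
      Indep (MeasurableSpace.comap (fun ω => (f t ω, g t ω)) inferInstance)
        (ℱ (t - 1)) P)
    (μ : EuclideanSpace ℝ (Fin d) → Fin 2 → ℝ)
    (hμ : ∀ t ∈ Finset.Icc 1 T, ∀ y ∈ X,
      (∫ ω, f t ω y ∂P) = μ y 0 ∧ (∫ ω, g t ω y ∂P) = μ y 1)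
    (θ : ℕ → Ω → Fin 2 → ℝ)
    (hθmeas : ∀ t ∈ Finset.Icc 1 T, Measurable[ℱ (t - 1)] (θ t))
    (hθsimplex : ∀ t ∈ Finset.Icc 1 T, ∀ ω, θ t ω ∈ stdSimplex ℝ (Fin 2)) :
    (∫ ω, sInf ((fun y => ∑ t ∈ Finset.Icc 1 T,
          (θ t ω 0 * f t ω y + θ t ω 1 * g t ω y)) '' X) ∂P)
      ≤ T * sInf ((fun y =>
          sSup ((fun ϑ => ϑ 0 * μ y 0 + ϑ 1 * μ y 1) '' stdSimplex ℝ (Fin 2))) '' X) := by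
  set F : Ω → EuclideanSpace ℝ (Fin d) → ℝ := fun ω y => ∑ t ∈ Finset.Icc 1 T,
    (θ t ω 0 * f t ω y + θ t ω 1 * g t ω y)
  have hθm : ∀ t ∈ Icc 1 T, Measurable (θ t) := fun t ht => (hθmeas t ht).mono (ℱ.le _) le_rfl
  have hf_int : ∀ t ∈ Icc 1 T, ∀ y ∈ X, Integrable (fun ω => f t ω y) P := fun t ht y hy =>
    .of_bound (hjm t ht).1.of_uncurry_right.aestronglyMeasurable B
      (ae_of_all _ fun ω => (hbdd t ht ω y hy).1)
  have hg_int : ∀ t ∈ Icc 1 T, ∀ y ∈ X, Integrable (fun ω => g t ω y) P := fun t ht y hy =>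
    .of_bound (hjm t ht).2.of_uncurry_right.aestronglyMeasurable B
      (ae_of_all _ fun ω => (hbdd t ht ω y hy).2)
  have hF_cont : ∀ ω, ContinuousOn (F ω) X := fun ω => continuousOn_finsetSum _ fun t ht =>
    (continuousOn_const.mul (hcont t ht ω).1).add (continuousOn_const.mul (hcont t ht ω).2)
  have hF_meas : ∀ y ∈ X, Measurable fun ω => F ω y := fun y _ => Finset.measurable_sum _
    fun t ht => ((hθm t ht).eval.mul (hjm t ht).1.of_uncurry_right).add
      ((hθm t ht).eval.mul (hjm t ht).2.of_uncurry_right)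
  have hF_abs : ∀ ω, ∀ y ∈ X, |F ω y| ≤ T * B := fun ω y hy => calc
    |F ω y| ≤ ∑ t ∈ Icc 1 T, |θ t ω 0 * f t ω y + θ t ω 1 * g t ω y| := abs_sum_le_sum_abs _ _
    _ ≤ ∑ _t ∈ Icc 1 T, B := sum_le_sum fun t ht =>
      abs_stdSimplex_comb_le (hθsimplex t ht ω) (hbdd t ht ω y hy).1 (hbdd t ht ω y hy).2
    _ = T * B := by simp
  refine le_mul_sInf_image hXne T.cast_nonneg fun x hx => ?_
  calc ∫ ω, sInf (F ω '' X) ∂P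
      ≤ ∫ ω, F ω x ∂P := integral_sInf_image_le hF_cont hF_meas hF_abs hx
    _ = ∑ t ∈ Icc 1 T, ∫ ω, θ t ω 0 * f t ω x + θ t ω 1 * g t ω x ∂P :=
      integral_finsetSum _ fun t ht =>
        ((hf_int t ht x hx).stdSimplex_apply_mul (hθm t ht) (hθsimplex t ht) 0).add
          ((hg_int t ht x hx).stdSimplex_apply_mul (hθm t ht) (hθsimplex t ht) 1)
    _ ≤ ∑ _t ∈ Icc 1 T, sSup ((fun ϑ => ϑ 0 * μ x 0 + ϑ 1 * μ x 1) '' stdSimplex ℝ (Fin 2)) :=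
      sum_le_sum fun t ht => integral_stdSimplex_comb_le_of_indep (ℱ.le _) (hindep t ht)
        (hθmeas t ht) (hθsimplex t ht) (hf_int t ht x hx) (hg_int t ht x hx)
        (hμ t ht x hx).1 (hμ t ht x hx).2
    _ = _ := by simp

/-- **Lemma 3 (`E[R₃] ≤ 0` in the i.i.d. model).**
For i.i.d. pairs of continuous, uniformly bounded random losses `(f t, g t)` on a
nonempty compact convex set `𝒳`, each independent of `ℱ (t−1)`, with mean vector
`μ(x) = E[(f t x, g t x)]`, and `ℱ (t−1)`-measurable simplex weights `θ t`, we have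
`E[ min_{x∈𝒳} Σ_t ⟨θ t, λ t(x)⟩ ] ≤ T · min_{x∈𝒳} max_{θ∈Δ₂} ⟨θ, μ(x)⟩`. -/
theorem expected_R3_nonpositive
    (d T : ℕ) (B : ℝ)
    (X : Set (EuclideanSpace ℝ (Fin d)))
    (hXne : X.Nonempty) (hXcomp : IsCompact X) (hXconv : Convex ℝ X)
    (Ω : Type) [m : MeasurableSpace Ω] (P : Measure Ω) [IsProbabilityMeasure P]
    (ℱ : Filtration ℕ m)
    (f g : ℕ → Ω → EuclideanSpace ℝ (Fin d) → ℝ)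
    (hcont : ∀ t ∈ Finset.Icc 1 T, ∀ ω, ContinuousOn (f t ω) X ∧ ContinuousOn (g t ω) X)
    (hjm : ∀ t ∈ Finset.Icc 1 T,
      Measurable (fun p : Ω × EuclideanSpace ℝ (Fin d) => f t p.1 p.2) ∧
      Measurable (fun p : Ω × EuclideanSpace ℝ (Fin d) => g t p.1 p.2))
    (hbdd : ∀ t ∈ Finset.Icc 1 T, ∀ ω, ∀ y ∈ X, |f t ω y| ≤ B ∧ |g t ω y| ≤ B)
    (hident : ∀ s ∈ Finset.Icc 1 T, ∀ t ∈ Finset.Icc 1 T,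
      IdentDistrib (fun ω => (f s ω, g s ω)) (fun ω => (f t ω, g t ω)) P P)
    (hindep : ∀ t ∈ Finset.Icc 1 T,
      Indep (MeasurableSpace.comap (fun ω => (f t ω, g t ω)) inferInstance)
        (ℱ (t - 1)) P)
    (μ : EuclideanSpace ℝ (Fin d) → Fin 2 → ℝ)
    (hμ : ∀ t ∈ Finset.Icc 1 T, ∀ y ∈ X,
      (∫ ω, f t ω y ∂P) = μ y 0 ∧ (∫ ω, g t ω y ∂P) = μ y 1)
    (θ : ℕ → Ω → Fin 2 → ℝ)
    (hθmeas : ∀ t ∈ Finset.Icc 1 T, Measurable[ℱ (t - 1)] (θ t))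
    (hθsimplex : ∀ t ∈ Finset.Icc 1 T, ∀ ω, θ t ω ∈ stdSimplex ℝ (Fin 2)) :
    (∫ ω, sInf ((fun y => ∑ t ∈ Finset.Icc 1 T,
          (θ t ω 0 * f t ω y + θ t ω 1 * g t ω y)) '' X) ∂P)
      ≤ T * sInf ((fun y =>
          sSup ((fun ϑ => ϑ 0 * μ y 0 + ϑ 1 * μ y 1) '' stdSimplex ℝ (Fin 2))) '' X) :=
  expected_R3_nonpositive_general d T B X hXne Ω (m := m) P ℱ f g hcont hjm hbdd hindep μ hμ θ
    hθmeas hθsimplex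
end

section
/- Adversarial bound on R₃ via Hedge stability (Theorem 3): let 𝒳 ⊆ ℝ^d be nonempty compact, let λ_1,…,λ_T : 𝒳 → ℝ² be continuous with ‖λ_t(x)‖_∞ ≤ B for all x ∈ 𝒳 and all t, let g_1,…,g_T ∈ [−B, B]² be any gain vectors and η_{θ,1},…,η_{θ,T} > 0 step sizes, and let θ_1,…,θ_T be the corresponding Hedge iterates: w_{1,i} = 1, w_{t+1,i} = w_{t,i}·exp(η_{θ,t} g_{t,i}), θ_t = w_t/‖w_t‖₁. Then R₃ := min_{x∈𝒳} Σ_{t=1}^T ⟨θ_t, λ_t(x)⟩ − min_{x∈𝒳} max_{θ∈Δ₂} Σ_{t=1}^T ⟨θ, λ_t(x)⟩ ≤ 2B²T·Σ_{t=1}^T η_{θ,t}. -/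
open Finset Real

lemma exp_diff_le (a b : ℝ) : |Real.exp a - Real.exp b| ≤ |a - b| * (Real.exp a + Real.exp b) := by
  wlog h : b ≤ a generalizing a b
  · have := this b a (le_of_not_ge h)
    rw [abs_sub_comm, abs_sub_comm a b]; linarith
  have h1 := Real.add_one_le_exp (b - a)
  have h2 : Real.exp (b - a) * Real.exp a = Real.exp b := by
    rw [← Real.exp_add]; ring_nf
  have hea := Real.exp_pos a
  have heb := Real.exp_pos b
  rw [abs_of_nonneg (by linarith [Real.exp_le_exp.2 h] : (0:ℝ) ≤ Real.exp a - Real.exp b),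
      abs_of_nonneg (by linarith : (0:ℝ) ≤ a - b)]
  nlinarith [mul_le_mul_of_nonneg_right h1 hea.le]

lemma hedge_step (a b l0 l1 B D : ℝ) (hl0 : |l0| ≤ B) (hl1 : |l1| ≤ B)
    (hab : |a - b| ≤ D) :
    Real.exp a / (Real.exp a + Real.exp b) * l0
      + Real.exp b / (Real.exp a + Real.exp b) * l1
      ≤ 2⁻¹ * l0 + 2⁻¹ * l1 + B * D := by
  have hS : 0 < Real.exp a + Real.exp b := by positivity
  have hB : 0 ≤ B := le_trans (abs_nonneg _) hl0
  have hD : 0 ≤ D := le_trans (abs_nonneg _) hab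
  have hdiff := exp_diff_le a b
  have key : Real.exp a / (Real.exp a + Real.exp b) * l0
      + Real.exp b / (Real.exp a + Real.exp b) * l1
      - (2⁻¹ * l0 + 2⁻¹ * l1)
      = ((Real.exp a - Real.exp b) * (l0 - l1)) / (2 * (Real.exp a + Real.exp b)) := by
    field_simp; ring
  have hl01 : |l0 - l1| ≤ 2 * B := by
    have := abs_le.1 hl0; have := abs_le.1 hl1
    exact abs_le.2 ⟨by linarith, by linarith⟩
  have h1 : |((Real.exp a - Real.exp b) * (l0 - l1)) / (2 * (Real.exp a + Real.exp b))| ≤ B * D := by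
    rw [abs_div, abs_mul, abs_of_pos (by positivity : (0:ℝ) < 2 * (Real.exp a + Real.exp b)),
        div_le_iff₀ (by positivity)]
    calc |Real.exp a - Real.exp b| * |l0 - l1|
        ≤ (|a - b| * (Real.exp a + Real.exp b)) * (2 * B) :=
          mul_le_mul hdiff hl01 (abs_nonneg _) (by positivity)
      _ ≤ (D * (Real.exp a + Real.exp b)) * (2 * B) := by
          exact mul_le_mul_of_nonneg_right
            (mul_le_mul_of_nonneg_right hab hS.le) (by positivity)
      _ = B * D * (2 * (Real.exp a + Real.exp b)) := by ring
  linarith [key, (abs_le.1 h1).2]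

/-- **Adversarial bound on `R₃` via Hedge stability (Theorem 3).**
For continuous losses `λ t : 𝒳 → ℝ²` bounded by `B`, arbitrary gain vectors
`g t ∈ [−B,B]²`, positive step sizes `η t`, and the corresponding Hedge iterates
`θ t`, one has
`R₃ := min_x Σ_t ⟨θ t, λ t(x)⟩ − min_x max_{θ∈Δ₂} Σ_t ⟨θ, λ t(x)⟩ ≤ 2B²T·Σ_t η t`. -/
theorem adversarial_R3_bound
    (d T : ℕ) (B : ℝ) (hB : 0 < B)
    (X : Set (EuclideanSpace ℝ (Fin d)))
    (hXne : X.Nonempty) (hXcomp : IsCompact X)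
    (lam : ℕ → EuclideanSpace ℝ (Fin d) → Fin 2 → ℝ)
    (hcont : ∀ t ∈ Finset.Icc 1 T, ∀ i, ContinuousOn (fun y => lam t y i) X)
    (hbdd : ∀ t ∈ Finset.Icc 1 T, ∀ y ∈ X, ∀ i, |lam t y i| ≤ B)
    (gv : ℕ → Fin 2 → ℝ)
    (hgv : ∀ t ∈ Finset.Icc 1 T, ∀ i, gv t i ∈ Set.Icc (-B) B)
    (η : ℕ → ℝ) (hη : ∀ t ∈ Finset.Icc 1 T, 0 < η t)
    (w θ : ℕ → Fin 2 → ℝ)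
    (hw1 : ∀ i, w 1 i = 1)
    (hwrec : ∀ t ∈ Finset.Icc 1 T, ∀ i, w (t + 1) i = w t i * Real.exp (η t * gv t i))
    (hθ : ∀ t ∈ Finset.Icc 1 T, ∀ i, θ t i = w t i / (∑ j, |w t j|)) :
    sInf ((fun y => ∑ t ∈ Finset.Icc 1 T, ∑ i, θ t i * lam t y i) '' X)
      - sInf ((fun y => sSup ((fun ϑ => ∑ t ∈ Finset.Icc 1 T, ∑ i, ϑ i * lam t y i)
          '' stdSimplex ℝ (Fin 2))) '' X)
      ≤ 2 * B ^ 2 * T * ∑ t ∈ Finset.Icc 1 T, η t := by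
  set Sη : ℝ := ∑ t ∈ Finset.Icc 1 T, η t with hSη
  have hSηnn : 0 ≤ Sη := Finset.sum_nonneg fun s hs => (hη s hs).le
  set c : ℕ → Fin 2 → ℝ := fun t i => ∑ s ∈ Finset.Icc 1 (t-1), η s * gv s i with hc
  -- closed form for the weights
  have hwexp : ∀ t, 1 ≤ t → t ≤ T → ∀ i, w t i = Real.exp (c t i) := by
    intro t ht1
    induction t, ht1 using Nat.le_induction with
    | base =>
      intro _ i
      simp [hc, hw1 i]
    | succ n hn ih =>
      intro hnT i
      have hnT' : n ≤ T := le_trans (Nat.le_succ n) hnT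
      rw [hwrec n (Finset.mem_Icc.2 ⟨hn, hnT'⟩) i, ih hnT' i, ← Real.exp_add]
      congr 1
      have hn' : n - 1 + 1 = n := Nat.succ_pred_eq_of_pos hn
      show (∑ s ∈ Finset.Icc 1 (n-1), η s * gv s i) + η n * gv n i
          = ∑ s ∈ Finset.Icc 1 (n+1-1), η s * gv s i
      have : n + 1 - 1 = n := rfl
      rw [this]
      calc (∑ s ∈ Finset.Icc 1 (n-1), η s * gv s i) + η n * gv n i
          = (∑ s ∈ Finset.Icc 1 (n-1), η s * gv s i) + η (n-1+1) * gv (n-1+1) i := by rw [hn']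
        _ = ∑ s ∈ Finset.Icc 1 (n-1+1), η s * gv s i :=
            (Finset.sum_Icc_succ_top (by omega) _).symm
        _ = ∑ s ∈ Finset.Icc 1 n, η s * gv s i := by rw [hn']
  -- closed form for θ
  have hθform : ∀ t ∈ Finset.Icc 1 T, ∀ i,
      θ t i = Real.exp (c t i) / (Real.exp (c t 0) + Real.exp (c t 1)) := by
    intro t ht i
    obtain ⟨ht1, ht2⟩ := Finset.mem_Icc.1 ht
    rw [hθ t ht i, Fin.sum_univ_two, hwexp t ht1 ht2 i, hwexp t ht1 ht2 0, hwexp t ht1 ht2 1,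
        abs_of_pos (Real.exp_pos _), abs_of_pos (Real.exp_pos _)]
  have hθnn : ∀ t ∈ Finset.Icc 1 T, ∀ i, 0 ≤ θ t i := by
    intro t ht i; rw [hθform t ht i]; positivity
  have hθsum : ∀ t ∈ Finset.Icc 1 T, θ t 0 + θ t 1 = 1 := by
    intro t ht
    rw [hθform t ht 0, hθform t ht 1]
    have h0 := Real.exp_pos (c t 0); have h1 := Real.exp_pos (c t 1)
    field_simp
  -- the drift bound
  have hcd : ∀ t ∈ Finset.Icc 1 T, |c t 0 - c t 1| ≤ 2 * B * Sη := by
    intro t ht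
    obtain ⟨ht1, ht2⟩ := Finset.mem_Icc.1 ht
    have hsub : Finset.Icc 1 (t-1) ⊆ Finset.Icc 1 T :=
      Finset.Icc_subset_Icc_right (le_trans (Nat.sub_le t 1) ht2)
    calc |c t 0 - c t 1| = |∑ s ∈ Finset.Icc 1 (t-1), (η s * gv s 0 - η s * gv s 1)| := by
          rw [hc]; rw [← Finset.sum_sub_distrib]
      _ ≤ ∑ s ∈ Finset.Icc 1 (t-1), |η s * gv s 0 - η s * gv s 1| :=
          Finset.abs_sum_le_sum_abs _ _
      _ ≤ ∑ s ∈ Finset.Icc 1 (t-1), η s * (2 * B) := by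
          apply Finset.sum_le_sum
          intro s hs
          have hsT := hsub hs
          have hηs := hη s hsT
          have h0 := (hgv s hsT 0); have h1 := (hgv s hsT 1)
          rw [Set.mem_Icc] at h0 h1
          have : |gv s 0 - gv s 1| ≤ 2 * B := abs_le.2 ⟨by linarith [h0.1, h1.2], by linarith [h0.2, h1.1]⟩
          calc |η s * gv s 0 - η s * gv s 1| = η s * |gv s 0 - gv s 1| := by
                rw [← mul_sub, abs_mul, abs_of_pos hηs]
            _ ≤ η s * (2 * B) := mul_le_mul_of_nonneg_left this hηs.le
      _ ≤ ∑ s ∈ Finset.Icc 1 T, η s * (2 * B) := by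
          apply Finset.sum_le_sum_of_subset_of_nonneg hsub
          intro s hs _
          exact mul_nonneg (hη s hs).le (by positivity)
      _ = 2 * B * Sη := by rw [hSη, ← Finset.sum_mul]; ring
  -- per-round bound
  have hstep : ∀ t ∈ Finset.Icc 1 T, ∀ y ∈ X,
      (∑ i, θ t i * lam t y i) ≤ (∑ i, (2:ℝ)⁻¹ * lam t y i) + 2 * B ^ 2 * Sη := by
    intro t ht y hy
    rw [Fin.sum_univ_two, Fin.sum_univ_two, hθform t ht 0, hθform t ht 1]
    have := hedge_step (c t 0) (c t 1) (lam t y 0) (lam t y 1) B (2 * B * Sη)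
      (hbdd t ht y hy 0) (hbdd t ht y hy 1) (hcd t ht)
    calc Real.exp (c t 0) / (Real.exp (c t 0) + Real.exp (c t 1)) * lam t y 0
          + Real.exp (c t 1) / (Real.exp (c t 0) + Real.exp (c t 1)) * lam t y 1
        ≤ 2⁻¹ * lam t y 0 + 2⁻¹ * lam t y 1 + B * (2 * B * Sη) := this
      _ = 2⁻¹ * lam t y 0 + 2⁻¹ * lam t y 1 + 2 * B ^ 2 * Sη := by ring
  -- summed bound
  have hsummed : ∀ y ∈ X,
      (∑ t ∈ Finset.Icc 1 T, ∑ i, θ t i * lam t y i)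
        ≤ (∑ t ∈ Finset.Icc 1 T, ∑ i, (2:ℝ)⁻¹ * lam t y i) + 2 * B ^ 2 * T * Sη := by
    intro y hy
    calc (∑ t ∈ Finset.Icc 1 T, ∑ i, θ t i * lam t y i)
        ≤ ∑ t ∈ Finset.Icc 1 T, ((∑ i, (2:ℝ)⁻¹ * lam t y i) + 2 * B ^ 2 * Sη) :=
          Finset.sum_le_sum (fun t ht => hstep t ht y hy)
      _ = (∑ t ∈ Finset.Icc 1 T, ∑ i, (2:ℝ)⁻¹ * lam t y i) + 2 * B ^ 2 * T * Sη := by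
          rw [Finset.sum_add_distrib, Finset.sum_const, Nat.card_Icc]
          simp only [Nat.add_sub_cancel, nsmul_eq_mul]
          ring
  -- midpoint is dominated by sSup over the simplex
  have hmid : ∀ y ∈ X,
      (∑ t ∈ Finset.Icc 1 T, ∑ i, (2:ℝ)⁻¹ * lam t y i)
        ≤ sSup ((fun ϑ => ∑ t ∈ Finset.Icc 1 T, ∑ i, ϑ i * lam t y i)
            '' stdSimplex ℝ (Fin 2)) := by
    intro y hy
    have hmem : (fun _ : Fin 2 => (2:ℝ)⁻¹) ∈ stdSimplex ℝ (Fin 2) := by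
      refine ⟨fun i => by norm_num, ?_⟩
      rw [Fin.sum_univ_two]; norm_num
    have hbdda : BddAbove ((fun ϑ => ∑ t ∈ Finset.Icc 1 T, ∑ i, ϑ i * lam t y i)
        '' stdSimplex ℝ (Fin 2)) := by
      refine ⟨T * B, ?_⟩
      rintro z ⟨ϑ, hϑ, rfl⟩
      calc (∑ t ∈ Finset.Icc 1 T, ∑ i, ϑ i * lam t y i)
          ≤ ∑ t ∈ Finset.Icc 1 T, (B : ℝ) := by
            apply Finset.sum_le_sum
            intro t ht
            calc (∑ i, ϑ i * lam t y i) ≤ ∑ i, ϑ i * B := by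
                  apply Finset.sum_le_sum
                  intro i _
                  exact mul_le_mul_of_nonneg_left
                    (le_trans (le_abs_self _) (hbdd t ht y hy i)) (hϑ.1 i)
              _ = B := by rw [← Finset.sum_mul, hϑ.2, one_mul]
        _ = T * B := by rw [Finset.sum_const, Nat.card_Icc, Nat.add_sub_cancel, nsmul_eq_mul]
    exact le_csSup hbdda ⟨_, hmem, rfl⟩
  -- the θ-objective is bounded below on X
  have hfbdd : BddBelow ((fun y => ∑ t ∈ Finset.Icc 1 T, ∑ i, θ t i * lam t y i) '' X) := by
    refine ⟨-(T * B), ?_⟩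
    rintro z ⟨y, hy, rfl⟩
    have : ∀ t ∈ Finset.Icc 1 T, -(B : ℝ) ≤ ∑ i, θ t i * lam t y i := by
      intro t ht
      calc -(B : ℝ) = ∑ i, θ t i * (-B) := by
            rw [← Finset.sum_mul, Fin.sum_univ_two, hθsum t ht, one_mul]
        _ ≤ ∑ i, θ t i * lam t y i := by
            apply Finset.sum_le_sum
            intro i _
            exact mul_le_mul_of_nonneg_left
              (neg_le_of_abs_le (hbdd t ht y hy i)) (hθnn t ht i)
    calc -((T : ℝ) * B) = ∑ t ∈ Finset.Icc 1 T, -(B : ℝ) := by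
          rw [Finset.sum_const, Nat.card_Icc, Nat.add_sub_cancel, nsmul_eq_mul]; ring
      _ ≤ ∑ t ∈ Finset.Icc 1 T, ∑ i, θ t i * lam t y i := Finset.sum_le_sum this
  -- conclude
  have hhne : ((fun y => sSup ((fun ϑ => ∑ t ∈ Finset.Icc 1 T, ∑ i, ϑ i * lam t y i)
      '' stdSimplex ℝ (Fin 2))) '' X).Nonempty := hXne.image _
  have hkey : sInf ((fun y => sSup ((fun ϑ => ∑ t ∈ Finset.Icc 1 T, ∑ i, ϑ i * lam t y i)
      '' stdSimplex ℝ (Fin 2))) '' X)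
      ≥ sInf ((fun y => ∑ t ∈ Finset.Icc 1 T, ∑ i, θ t i * lam t y i) '' X)
        - 2 * B ^ 2 * T * Sη := by
    apply le_csInf hhne
    rintro z ⟨x, hx, rfl⟩
    have h1 : sInf ((fun y => ∑ t ∈ Finset.Icc 1 T, ∑ i, θ t i * lam t y i) '' X)
        ≤ ∑ t ∈ Finset.Icc 1 T, ∑ i, θ t i * lam t x i := csInf_le hfbdd ⟨x, hx, rfl⟩
    linarith [hsummed x hx, hmid x hx]
  linarith [hkey]
end

section
/- Bound of R₃ by deviation from the averaged weights (Lemma in Appendix): let 𝒳 ⊆ ℝ^d be nonempty compact, let λ_1,…,λ_T : 𝒳 → ℝ² be continuous with ‖λ_t(x)‖_∞ ≤ B for all x ∈ 𝒳 and all t, let θ_1,…,θ_T ∈ Δ₂ be arbitrary, and set θ̄ = (1/T)·Σ_{t=1}^T θ_t ∈ Δ₂. Then min_{x∈𝒳} Σ_{t=1}^T ⟨θ_t, λ_t(x)⟩ − min_{x∈𝒳} max_{θ∈Δ₂} Σ_{t=1}^T ⟨θ, λ_t(x)⟩ ≤ B·Σ_{t=1}^T ‖θ_t − θ̄‖₁.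 -/
open Finset

/-!
Fix `y ∈ X`. Pairing with the average `θ̄`, which lies in `Δ₂` because the simplex is convex,
gives one candidate in the inner maximum, so `Σ_t ⟨θ̄, λ_t(y)⟩ ≤ max_{θ∈Δ₂} Σ_t ⟨θ, λ_t(y)⟩`. By
Hölder's inequality (`ℓ¹` against `ℓ^∞`),
`Σ_t ⟨θ_t, λ_t(y)⟩ ≤ Σ_t ⟨θ̄, λ_t(y)⟩ + B Σ_t ‖θ_t − θ̄‖₁`. Taking the infimum over `y ∈ X` of
the resulting pointwise bound proves the claim.
-/

section Pairing

variable {ι κ : Type*} [Fintype κ]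

theorem sum_mul_le_mul_sum_abs {u v : κ → ℝ} {B : ℝ} (hv : ∀ i, |v i| ≤ B) :
    ∑ i, u i * v i ≤ B * ∑ i, |u i| := by
  rw [mul_sum]
  refine sum_le_sum fun i _ => ?_
  calc u i * v i ≤ |u i * v i| := le_abs_self _
    _ = |u i| * |v i| := abs_mul _ _
    _ ≤ |u i| * B := mul_le_mul_of_nonneg_left (hv i) (abs_nonneg _)
    _ = B * |u i| := mul_comm _ _

theorem abs_sum_mul_le_of_mem_stdSimplex {ϑ v : κ → ℝ} {B : ℝ} (hϑ : ϑ ∈ stdSimplex ℝ κ)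
    (hv : ∀ i, |v i| ≤ B) : |∑ i, ϑ i * v i| ≤ B := by
  have hϑ_abs : ∑ i, |ϑ i| = 1 := by
    rw [← hϑ.2]
    exact sum_congr rfl fun i _ => abs_of_nonneg (hϑ.1 i)
  have hv_neg : ∀ i, |(-v) i| ≤ B := fun i => by simpa using hv i
  have upper := sum_mul_le_mul_sum_abs (u := ϑ) hv
  have lower := sum_mul_le_mul_sum_abs (u := ϑ) hv_neg
  simp only [Pi.neg_apply, mul_neg, sum_neg_distrib, hϑ_abs, mul_one] at upper lower
  exact abs_le.mpr ⟨by linarith, upper⟩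

theorem abs_sum_sum_mul_le_card_mul {S : Finset ι} {w v : ι → κ → ℝ} {B : ℝ}
    (hw : ∀ t ∈ S, w t ∈ stdSimplex ℝ κ) (hv : ∀ t ∈ S, ∀ i, |v t i| ≤ B) :
    |∑ t ∈ S, ∑ i, w t i * v t i| ≤ S.card * B :=
  calc |∑ t ∈ S, ∑ i, w t i * v t i| ≤ ∑ t ∈ S, |∑ i, w t i * v t i| := abs_sum_le_sum_abs _ _
    _ ≤ ∑ _t ∈ S, B :=
      sum_le_sum fun t ht => abs_sum_mul_le_of_mem_stdSimplex (hw t ht) (hv t ht)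
    _ = S.card * B := by rw [sum_const, nsmul_eq_mul]

theorem sum_sum_mul_sub_le {S : Finset ι} {θ v : ι → κ → ℝ} {ϑ : κ → ℝ} {B : ℝ}
    (hv : ∀ t ∈ S, ∀ i, |v t i| ≤ B) :
    ∑ t ∈ S, ∑ i, θ t i * v t i - ∑ t ∈ S, ∑ i, ϑ i * v t i
      ≤ B * ∑ t ∈ S, ∑ i, |θ t i - ϑ i| := by
  simp only [← sum_sub_distrib, ← sub_mul]
  rw [mul_sum]
  exact sum_le_sum fun t ht => sum_mul_le_mul_sum_abs (hv t ht)

theorem average_mem_stdSimplex {S : Finset ι} (hS : S.Nonempty) {θ : ι → κ → ℝ}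
    (hθ : ∀ t ∈ S, θ t ∈ stdSimplex ℝ κ) :
    (fun i => (1 / (S.card : ℝ)) * ∑ t ∈ S, θ t i) ∈ stdSimplex ℝ κ := by
  have hcard : (0 : ℝ) < S.card := Nat.cast_pos.mpr hS.card_pos
  convert (convex_stdSimplex ℝ κ).sum_mem (w := fun _ => 1 / (S.card : ℝ))
    (fun _ _ => by positivity) (by simp [hcard.ne']) hθ using 1
  ext i
  simp [Finset.sum_apply, mul_sum]

end Pairing

theorem csInf_image_le_csInf_image_add {α : Type*} {s : Set α} (hs : s.Nonempty) {f g : α → ℝ}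
    {C : ℝ} (hf : BddBelow (f '' s)) (hfg : ∀ x ∈ s, f x ≤ g x + C) :
    sInf (f '' s) ≤ sInf (g '' s) + C := by
  rw [← sub_le_iff_le_add]
  refine le_csInf (hs.image g) ?_
  rintro _ ⟨x, hx, rfl⟩
  linarith [csInf_le hf ⟨x, hx, rfl⟩, hfg x hx]

theorem R3_deviation_from_average_general
    (d T : ℕ) (B : ℝ)
    (X : Set (EuclideanSpace ℝ (Fin d)))
    (hXne : X.Nonempty)
    (lam : ℕ → EuclideanSpace ℝ (Fin d) → Fin 2 → ℝ)
    (hbdd : ∀ t ∈ Finset.Icc 1 T, ∀ y ∈ X, ∀ i, |lam t y i| ≤ B)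
    (θ : ℕ → Fin 2 → ℝ)
    (hθ : ∀ t ∈ Finset.Icc 1 T, θ t ∈ stdSimplex ℝ (Fin 2))
    (θbar : Fin 2 → ℝ)
    (hθbar : ∀ i, θbar i = (1 / (T : ℝ)) * ∑ t ∈ Finset.Icc 1 T, θ t i) :
    sInf ((fun y => ∑ t ∈ Finset.Icc 1 T, ∑ i, θ t i * lam t y i) '' X)
      - sInf ((fun y => sSup ((fun ϑ => ∑ t ∈ Finset.Icc 1 T, ∑ i, ϑ i * lam t y i)
          '' stdSimplex ℝ (Fin 2))) '' X)
      ≤ B * ∑ t ∈ Finset.Icc 1 T, ∑ i, |θ t i - θbar i| := by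
  rcases (Icc 1 T).eq_empty_or_nonempty with hT | hT
  · have hsimplex : (stdSimplex ℝ (Fin 2)).Nonempty := ⟨_, single_mem_stdSimplex ℝ 0⟩
    simp [hT, hXne.image_const, hsimplex.image_const]
  have hθbar_mem : θbar ∈ stdSimplex ℝ (Fin 2) := by
    convert average_mem_stdSimplex hT hθ using 1
    ext i
    rw [hθbar, Nat.card_Icc, Nat.add_sub_cancel]
  rw [sub_le_iff_le_add']
  refine csInf_image_le_csInf_image_add hXne ⟨-((Icc 1 T).card * B), ?_⟩ fun y hy => ?_
  · rintro _ ⟨y, hy, rfl⟩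
    exact neg_le_of_abs_le (abs_sum_sum_mul_le_card_mul hθ fun t ht => hbdd t ht y hy)
  have hpayoff_bdd : BddAbove ((fun ϑ => ∑ t ∈ Icc 1 T, ∑ i, ϑ i * lam t y i)
      '' stdSimplex ℝ (Fin 2)) := by
    refine ⟨(Icc 1 T).card * B, ?_⟩
    rintro _ ⟨ϑ, hϑ, rfl⟩
    exact le_of_abs_le (abs_sum_sum_mul_le_card_mul (fun _ _ => hϑ) fun t ht => hbdd t ht y hy)
  linarith [sum_sum_mul_sub_le (θ := θ) (ϑ := θbar) fun t ht => hbdd t ht y hy,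
    le_csSup hpayoff_bdd ⟨θbar, hθbar_mem, rfl⟩]

/-- **Bound of `R₃` by deviation from the averaged weights.**
For continuous losses `λ t : 𝒳 → ℝ²` bounded by `B` and arbitrary simplex weights
`θ t ∈ Δ₂` with time average `θ̄ = (1/T)·Σ_t θ t`, one has
`min_x Σ_t ⟨θ t, λ t(x)⟩ − min_x max_{θ∈Δ₂} Σ_t ⟨θ, λ t(x)⟩ ≤ B·Σ_t ‖θ t − θ̄‖₁`. -/
theorem R3_deviation_from_average
    (d T : ℕ) (B : ℝ) (hB : 0 < B)
    (X : Set (EuclideanSpace ℝ (Fin d)))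
    (hXne : X.Nonempty) (hXcomp : IsCompact X)
    (lam : ℕ → EuclideanSpace ℝ (Fin d) → Fin 2 → ℝ)
    (hcont : ∀ t ∈ Finset.Icc 1 T, ∀ i, ContinuousOn (fun y => lam t y i) X)
    (hbdd : ∀ t ∈ Finset.Icc 1 T, ∀ y ∈ X, ∀ i, |lam t y i| ≤ B)
    (θ : ℕ → Fin 2 → ℝ)
    (hθ : ∀ t ∈ Finset.Icc 1 T, θ t ∈ stdSimplex ℝ (Fin 2))
    (θbar : Fin 2 → ℝ)
    (hθbar : ∀ i, θbar i = (1 / (T : ℝ)) * ∑ t ∈ Finset.Icc 1 T, θ t i) :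
    sInf ((fun y => ∑ t ∈ Finset.Icc 1 T, ∑ i, θ t i * lam t y i) '' X)
      - sInf ((fun y => sSup ((fun ϑ => ∑ t ∈ Finset.Icc 1 T, ∑ i, ϑ i * lam t y i)
          '' stdSimplex ℝ (Fin 2))) '' X)
      ≤ B * ∑ t ∈ Finset.Icc 1 T, ∑ i, |θ t i - θbar i| :=
  R3_deviation_from_average_general d T B X hXne lam hbdd θ hθ θbar hθbar
end

section
/- One-step total-variation bound for Hedge: let θ ∈ Δ_n be a probability vector, let λ ∈ ℝ^n satisfy λ_i ∈ [0, B] for all i, let η > 0, and define the updated probability vector θ'_i = θ_i·exp(η λ_i) / Σ_{j=1}^n θ_j·exp(η λ_j). Then ‖θ' − θ‖₁ = Σ_{i=1}^n |θ'_i − θ_i| ≤ η·B. -/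
open Finset

/-!
With `w i = exp (η λ i) ∈ [1, e^{ηB}]` and `Z = ∑ θ j w j`, the update moves coordinate `i` by
`θ i (w i - Z) / Z`. Deviations from the mean `Z` sum to zero, so `∑ θ i |w i - Z|` is twice its
positive part and twice its negative part, hence at most `2 min (e^{ηB} - Z, Z - 1)`. Dividing by
`Z` and optimising over `Z` gives `2 tanh (ηB / 2) ≤ ηB`.
-/

lemma two_mul_exp_sub_one_le_mul_exp_add_one {x : ℝ} (hx : 0 ≤ x) :
    2 * (Real.exp x - 1) ≤ x * (Real.exp x + 1) := by
  let g : ℝ → ℝ := fun t => t * (Real.exp t + 1) - 2 * (Real.exp t - 1)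
  have hg : ∀ t, HasDerivAt g (1 + (t - 1) * Real.exp t) t := fun t =>
    (((hasDerivAt_id' t).mul ((Real.hasDerivAt_exp t).add_const 1)).sub
      (((Real.hasDerivAt_exp t).sub_const 1).const_mul 2)).congr_deriv (by ring)
  have hg_nonneg : ∀ t, 0 ≤ 1 + (t - 1) * Real.exp t := fun t => by
    have h := mul_le_mul_of_nonneg_right (Real.add_one_le_exp (-t)) (Real.exp_pos t).le
    rw [← Real.exp_add, neg_add_cancel, Real.exp_zero] at h
    linarith
  simpa [g] using monotone_of_hasDerivAt_nonneg hg hg_nonneg hx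

lemma min_sub_div_le_sub_div_add {m M z : ℝ} (hm : 0 < m) (hmz : m ≤ z) (hzM : z ≤ M) :
    min (M - z) (z - m) / z ≤ (M - m) / (M + m) := by
  rw [div_le_div_iff₀ (by linarith) (by linarith)]
  rcases le_total (2 * z) (M + m) with hz | hz
  · nlinarith [min_le_right (M - z) (z - m)]
  · nlinarith [min_le_left (M - z) (z - m)]

section Reweight

variable {ι : Type*} [Fintype ι] {θ w : ι → ℝ} {m M : ℝ}

noncomputable def reweight (θ w : ι → ℝ) (i : ι) : ℝ := θ i * w i / ∑ j, θ j * w j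

lemma sum_mul_mem_Icc_of_mem_stdSimplex (hθ : θ ∈ stdSimplex ℝ ι) (hw : ∀ i, w i ∈ Set.Icc m M) :
    ∑ i, θ i * w i ∈ Set.Icc m M := by
  constructor
  · calc m = ∑ i, θ i * m := by rw [← sum_mul, hθ.2, one_mul]
      _ ≤ ∑ i, θ i * w i := sum_le_sum fun i _ => mul_le_mul_of_nonneg_left (hw i).1 (hθ.1 i)
  · calc ∑ i, θ i * w i ≤ ∑ i, θ i * M :=
          sum_le_sum fun i _ => mul_le_mul_of_nonneg_left (hw i).2 (hθ.1 i)
      _ = M := by rw [← sum_mul, hθ.2, one_mul]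

lemma sum_mul_abs_sub_mean_le (hθ : θ ∈ stdSimplex ℝ ι) (hw : ∀ i, w i ∈ Set.Icc m M) :
    ∑ i, θ i * |w i - ∑ j, θ j * w j| ≤
      2 * min (M - ∑ j, θ j * w j) (∑ j, θ j * w j - m) := by
  set μ := ∑ j, θ j * w j
  obtain ⟨hmμ, hμM⟩ := sum_mul_mem_Icc_of_mem_stdSimplex hθ hw
  have hcentered : ∑ i, θ i * (w i - μ) = 0 := by
    simp only [mul_sub, sum_sub_distrib, ← sum_mul, hθ.2, one_mul, sub_self, μ]
  have hsum_const (c : ℝ) : ∑ i, θ i * c = c := by rw [← sum_mul, hθ.2, one_mul]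
  rw [mul_min_of_nonneg _ _ zero_le_two, le_min_iff]
  constructor
  · calc ∑ i, θ i * |w i - μ| = ∑ i, θ i * (|w i - μ| + (w i - μ)) := by
          rw [← add_zero (∑ i, θ i * |w i - μ|), ← hcentered, ← sum_add_distrib]
          exact sum_congr rfl fun i _ => by ring
      _ ≤ ∑ i, θ i * (2 * (M - μ)) := sum_le_sum fun i _ =>
          mul_le_mul_of_nonneg_left (by cases abs_cases (w i - μ) <;> linarith [(hw i).2])
            (hθ.1 i)
      _ = 2 * (M - μ) := hsum_const _
  · calc ∑ i, θ i * |w i - μ| = ∑ i, θ i * (|w i - μ| - (w i - μ)) := by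
          rw [← sub_zero (∑ i, θ i * |w i - μ|), ← hcentered, ← sum_sub_distrib]
          exact sum_congr rfl fun i _ => by ring
      _ ≤ ∑ i, θ i * (2 * (μ - m)) := sum_le_sum fun i _ =>
          mul_le_mul_of_nonneg_left (by cases abs_cases (w i - μ) <;> linarith [(hw i).1])
            (hθ.1 i)
      _ = 2 * (μ - m) := hsum_const _

lemma sum_abs_reweight_sub_le (hθ : θ ∈ stdSimplex ℝ ι) (hm : 0 < m)
    (hw : ∀ i, w i ∈ Set.Icc m M) :
    ∑ i, |reweight θ w i - θ i| ≤ 2 * (M - m) / (M + m) := by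
  set Z := ∑ j, θ j * w j
  obtain ⟨hmZ, hZM⟩ := sum_mul_mem_Icc_of_mem_stdSimplex hθ hw
  have hZ : 0 < Z := hm.trans_le hmZ
  have hdisp : ∀ i, |reweight θ w i - θ i| = θ i * |w i - Z| / Z := fun i => by
    have h : reweight θ w i - θ i = θ i * (w i - Z) / Z := by
      change θ i * w i / Z - θ i = _
      field_simp
    rw [h, abs_div, abs_mul, abs_of_nonneg (hθ.1 i), abs_of_pos hZ]
  calc ∑ i, |reweight θ w i - θ i| = (∑ i, θ i * |w i - Z|) / Z := by
        simp only [hdisp, sum_div]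
    _ ≤ 2 * min (M - Z) (Z - m) / Z :=
        div_le_div_of_nonneg_right (sum_mul_abs_sub_mean_le hθ hw) hZ.le
    _ ≤ 2 * ((M - m) / (M + m)) := by
        rw [mul_div_assoc]
        exact mul_le_mul_of_nonneg_left (min_sub_div_le_sub_div_add hm hmZ hZM) zero_le_two
    _ = 2 * (M - m) / (M + m) := mul_div_assoc' ..

end Reweight

/-- **One-step total-variation bound for Hedge.**
If `θ ∈ Δ_n`, `λ i ∈ [0,B]`, `η > 0`, and `θ' i = θ i · exp(η λ i) / Σ_j θ j · exp(η λ j)`,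
then `‖θ' − θ‖₁ ≤ η·B`. -/
theorem hedge_one_step_tv_bound
    (n : ℕ) (B η : ℝ) (hη : 0 < η)
    (θ : Fin n → ℝ) (hθ : θ ∈ stdSimplex ℝ (Fin n))
    (lam : Fin n → ℝ) (hlam : ∀ i, lam i ∈ Set.Icc 0 B)
    (θ' : Fin n → ℝ)
    (hθ' : ∀ i, θ' i = θ i * Real.exp (η * lam i) / ∑ j, θ j * Real.exp (η * lam j)) :
    ∑ i, |θ' i - θ i| ≤ η * B := by
  obtain ⟨i₀, -⟩ := exists_ne_zero_of_sum_ne_zero (hθ.2.symm ▸ one_ne_zero : ∑ i, θ i ≠ 0)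
  have hηB : 0 ≤ η * B := mul_nonneg hη.le ((hlam i₀).1.trans (hlam i₀).2)
  have hw : ∀ i, Real.exp (η * lam i) ∈ Set.Icc 1 (Real.exp (η * B)) := fun i =>
    ⟨Real.one_le_exp (mul_nonneg hη.le (hlam i).1),
      Real.exp_le_exp.2 (mul_le_mul_of_nonneg_left (hlam i).2 hη.le)⟩
  have hθ'_eq : θ' = reweight θ fun i => Real.exp (η * lam i) := funext hθ'
  calc ∑ i, |θ' i - θ i| ≤ 2 * (Real.exp (η * B) - 1) / (Real.exp (η * B) + 1) :=
        hθ'_eq ▸ sum_abs_reweight_sub_le hθ one_pos hw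
    _ ≤ η * B := by
        rw [div_le_iff₀ (by positivity)]
        exact two_mul_exp_sub_one_le_mul_exp_add_one hηB
end
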